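/- arXiv:1811.12343 — 6 statements merged into one kernel-verified Lean document; each statement's English description precedes it below -/
import Mathlib

section
/- Let n ≥ 1 and let J = J_{2n} be the 2n×2n antidiagonal permutation matrix. A rook matrix A ∈ R_{2n} belongs to RSp_{2n} if and only if either AᵗJA = AJAᵗ = 0 or AᵗJA = AJAᵗ = J. -/
open Matrix

/-- A rook matrix: a 0-1 integer matrix with at most one nonzero entry
in each row and each column. -/
def IsRook (m : ℕ) (A : Matrix (Fin m) (Fin m) ℤ) : Prop :=
  (∀ i j, A i j = 0 ∨ A i j = 1) ∧
    (∀ i j₁ j₂, A i j₁ = 1 → A i j₂ = 1 → j₁ = j₂) ∧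
    (∀ j i₁ i₂, A i₁ j = 1 → A i₂ j = 1 → i₁ = i₂)

/-- The m×m antidiagonal permutation matrix (1-based: (i,j) entry is 1 iff i+j = m+1). -/
def Jmat (m : ℕ) : Matrix (Fin m) (Fin m) ℤ :=
  Matrix.of fun i j => if (i : ℕ) + (j : ℕ) + 1 = m then 1 else 0

/-- The permutation matrix of σ: column k has its 1 in row σ(k). -/
def permMat (m : ℕ) (σ : Equiv.Perm (Fin m)) : Matrix (Fin m) (Fin m) ℤ :=
  Matrix.of fun i j => if i = σ j then 1 else 0

/-- Admissible subset of {1,…,2n} (0-based: bar is `Fin.rev`). -/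
def Admissible (n : ℕ) (P : Set (Fin (2 * n))) : Prop :=
  P = Set.univ ∨ ∀ i ∈ P, Fin.rev i ∉ P

/-- Properly admissible subset of {1,…,2n}. -/
def ProperlyAdmissible (n : ℕ) (P : Set (Fin (2 * n))) : Prop :=
  ∀ i ∈ P, Fin.rev i ∉ P

/-- Membership in the symplectic Renner monoid RSp_{2n}. -/
def MemRSp (n : ℕ) (A : Matrix (Fin (2 * n)) (Fin (2 * n)) ℤ) : Prop :=
  (∃ σ : Equiv.Perm (Fin (2 * n)), A = permMat (2 * n) σ ∧
      ∀ P : Set (Fin (2 * n)), Admissible n P → Admissible n (σ '' P)) ∨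
    (ProperlyAdmissible n {j | ∃ i, A i j = 1} ∧
      ProperlyAdmissible n {i | ∃ j, A i j = 1})

lemma Jmat_apply (m : ℕ) (i j : Fin m) :
    Jmat m i j = if j = i.rev then 1 else 0 := by
  have hi := i.isLt
  have hcond : ((i:ℕ) + j + 1 = m) ↔ j = i.rev := by
    rw [Fin.ext_iff, Fin.val_rev]; omega
  simp only [Jmat, Matrix.of_apply, hcond]

lemma rev_ne (n : ℕ) (i : Fin (2*n)) : i.rev ≠ i := by
  intro h
  have := congrArg Fin.val h
  rw [Fin.val_rev] at this
  have hi := i.isLt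
  omega

lemma rev_eq_iff {m : ℕ} {i j : Fin m} : i.rev = j ↔ i = j.rev :=
  ⟨fun h => by rw [← h, Fin.rev_rev], fun h => by rw [h, Fin.rev_rev]⟩

lemma tJA_apply (m : ℕ) (A : Matrix (Fin m) (Fin m) ℤ) (j k : Fin m) :
    (Aᵀ * Jmat m * A) j k = ∑ l, A l j * A l.rev k := by
  rw [Matrix.mul_assoc]
  simp only [Matrix.mul_apply, Matrix.transpose_apply, Jmat_apply, ite_mul, one_mul, zero_mul,
    Finset.sum_ite_eq', Finset.mem_univ, if_true]

lemma AJ_apply (m : ℕ) (A : Matrix (Fin m) (Fin m) ℤ) (i q : Fin m) :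
    (A * Jmat m) i q = A i q.rev := by
  simp only [Matrix.mul_apply, Jmat_apply]
  rw [Finset.sum_eq_single q.rev]
  · simp
  · intro p _ hp
    rw [if_neg, mul_zero]
    intro h; exact hp (by rw [h, Fin.rev_rev])
  · simp

lemma AJt_apply (m : ℕ) (A : Matrix (Fin m) (Fin m) ℤ) (i l : Fin m) :
    (A * Jmat m * Aᵀ) i l = ∑ q, A i q.rev * A l q := by
  have h : A * Jmat m = Matrix.of fun i q => A i q.rev := by
    ext i q; exact AJ_apply m A i q
  rw [h]
  simp only [Matrix.mul_apply, Matrix.transpose_apply, Matrix.of_apply]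

-- σ preserving admissibles commutes with rev
lemma comm_of_preserve (n : ℕ) (σ : Equiv.Perm (Fin (2*n)))
    (hσ : ∀ P : Set (Fin (2 * n)), Admissible n P → Admissible n (σ '' P)) :
    ∀ i, σ i.rev = (σ i).rev := by
  intro i
  by_contra hne
  set j := σ.symm (σ i).rev with hj
  have hσj : σ j = (σ i).rev := σ.apply_symm_apply _
  have hji : j ≠ i := by
    intro h; rw [h] at hσj; exact rev_ne n (σ i) hσj.symm
  have hjrev : j ≠ i.rev := by
    intro h; rw [h] at hσj; exact hne hσj
  have hP : Admissible n {i, j} := by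
    right
    intro x hx
    intro hx2
    rcases hx with h | h
    · rcases hx2 with h2 | h2
      · rw [h] at h2; exact rev_ne n i h2
      · rw [Set.mem_singleton_iff] at h2; rw [h] at h2; exact hjrev h2.symm
    · rw [Set.mem_singleton_iff] at h
      rcases hx2 with h2 | h2
      · rw [h] at h2; exact hjrev (rev_eq_iff.mp h2)
      · rw [Set.mem_singleton_iff] at h2; rw [h] at h2; exact rev_ne n j h2
  have him := hσ _ hP
  have himage : σ '' {i, j} = {σ i, (σ i).rev} := by
    rw [Set.image_pair]; rw [hσj]
  rw [himage] at him
  rcases him with h | h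
  · -- image is univ : σ i.rev ∈ it
    have : σ i.rev ∈ ({σ i, (σ i).rev} : Set (Fin (2*n))) := by
      rw [h]; trivial
    rcases this with h' | h'
    · exact rev_ne n i (σ.injective h')
    · exact hne (Set.mem_singleton_iff.mp h')
  · exact h (σ i) (Or.inl rfl) (Or.inr rfl)

lemma preserve_of_comm (n : ℕ) (σ : Equiv.Perm (Fin (2*n)))
    (hc : ∀ i, σ i.rev = (σ i).rev) :
    ∀ P : Set (Fin (2 * n)), Admissible n P → Admissible n (σ '' P) := by
  intro P hP
  rcases hP with h | h
  · left; rw [h, Set.image_univ, Equiv.range_eq_univ]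
  · right
    rintro x ⟨i, hi, rfl⟩ ⟨i', hi', hrev⟩
    rw [← hc] at hrev
    have := σ.injective hrev
    rw [this] at hi'
    exact h i hi hi'

lemma tJA_perm (n : ℕ) (σ : Equiv.Perm (Fin (2*n))) (hc : ∀ i, σ i.rev = (σ i).rev) :
    (permMat (2*n) σ)ᵀ * Jmat (2*n) * permMat (2*n) σ = Jmat (2*n) := by
  ext j k
  rw [tJA_apply, Jmat_apply]
  simp only [permMat, Matrix.of_apply]
  rw [Finset.sum_eq_single (σ j)]
  · rw [if_pos rfl, one_mul]
    have hcond : ((σ j).rev = σ k) ↔ (k = j.rev) := by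
      rw [← hc, σ.injective.eq_iff, eq_comm]
    simp only [hcond]
  · intro l _ hl
    rw [if_neg hl, zero_mul]
  · simp

lemma AJt_perm (n : ℕ) (σ : Equiv.Perm (Fin (2*n))) (hc : ∀ i, σ i.rev = (σ i).rev) :
    permMat (2*n) σ * Jmat (2*n) * (permMat (2*n) σ)ᵀ = Jmat (2*n) := by
  ext i l
  rw [AJt_apply, Jmat_apply]
  simp only [permMat, Matrix.of_apply]
  rw [Finset.sum_eq_single (σ.symm l)]
  · rw [if_pos (σ.apply_symm_apply l).symm, mul_one]
    have hcond : (i = σ (σ.symm l).rev) ↔ (l = i.rev) := by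
      rw [hc, σ.apply_symm_apply]
      constructor
      · intro h; rw [h, Fin.rev_rev]
      · intro h; rw [h, Fin.rev_rev]
    simp only [hcond]
  · intro q _ hq
    have h0 : (if l = σ q then (1:ℤ) else 0) = 0 :=
      if_neg (fun h => hq (by rw [h, σ.symm_apply_apply]))
    rw [h0, mul_zero]
  · simp

lemma prods_zero (n : ℕ) (A : Matrix (Fin (2*n)) (Fin (2*n)) ℤ) (hA : IsRook (2*n) A)
    (hcol : ProperlyAdmissible n {j | ∃ i, A i j = 1})
    (hrow : ProperlyAdmissible n {i | ∃ j, A i j = 1}) :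
    Aᵀ * Jmat (2*n) * A = 0 ∧ A * Jmat (2*n) * Aᵀ = 0 := by
  constructor
  · ext j k
    rw [tJA_apply]
    simp only [Matrix.zero_apply]
    apply Finset.sum_eq_zero
    intro l _
    by_contra h
    rcases mul_ne_zero_iff.mp h with ⟨h1, h2⟩
    have e1 : A l j = 1 := (hA.1 l j).resolve_left h1
    have e2 : A l.rev k = 1 := (hA.1 l.rev k).resolve_left h2
    exact hrow l ⟨j, e1⟩ ⟨k, e2⟩
  · ext i l
    rw [AJt_apply]
    simp only [Matrix.zero_apply]
    apply Finset.sum_eq_zero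
    intro q _
    by_contra h
    rcases mul_ne_zero_iff.mp h with ⟨h1, h2⟩
    have e1 : A i q.rev = 1 := (hA.1 i q.rev).resolve_left h1
    have e2 : A l q = 1 := (hA.1 l q).resolve_left h2
    exact hcol q ⟨l, e2⟩ ⟨i, e1⟩

lemma proper_of_zero (n : ℕ) (A : Matrix (Fin (2*n)) (Fin (2*n)) ℤ) (hA : IsRook (2*n) A)
    (h1 : Aᵀ * Jmat (2*n) * A = 0) (h2 : A * Jmat (2*n) * Aᵀ = 0) :
    ProperlyAdmissible n {j | ∃ i, A i j = 1} ∧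
      ProperlyAdmissible n {i | ∃ j, A i j = 1} := by
  have hnn : ∀ i j, (0:ℤ) ≤ A i j := by
    intro i j; rcases hA.1 i j with h | h <;> rw [h] <;> norm_num
  constructor
  · rintro j ⟨i, hij⟩ ⟨l, hlj⟩
    have hz : (A * Jmat (2*n) * Aᵀ) i l = 0 := by rw [h2]; rfl
    rw [AJt_apply] at hz
    have := (Finset.sum_eq_zero_iff_of_nonneg (by
      intro q _; exact mul_nonneg (hnn _ _) (hnn _ _))).mp hz j.rev (Finset.mem_univ _)
    rw [Fin.rev_rev, hij, hlj] at this
    norm_num at this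
  · rintro i ⟨j, hij⟩ ⟨k, hik⟩
    have hz : (Aᵀ * Jmat (2*n) * A) j k = 0 := by rw [h1]; rfl
    rw [tJA_apply] at hz
    have := (Finset.sum_eq_zero_iff_of_nonneg (by
      intro l _; exact mul_nonneg (hnn _ _) (hnn _ _))).mp hz i (Finset.mem_univ _)
    rw [hij, hik] at this
    norm_num at this

lemma perm_of_J (n : ℕ) (A : Matrix (Fin (2*n)) (Fin (2*n)) ℤ) (hA : IsRook (2*n) A)
    (h1 : Aᵀ * Jmat (2*n) * A = Jmat (2*n)) :
    ∃ σ : Equiv.Perm (Fin (2 * n)), A = permMat (2 * n) σ ∧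
      ∀ i, σ i.rev = (σ i).rev := by
  have hex : ∀ j : Fin (2*n), ∃ l, A l j = 1 ∧ A l.rev j.rev = 1 := by
    intro j
    have he : (Aᵀ * Jmat (2*n) * A) j j.rev = 1 := by
      rw [h1, Jmat_apply, if_pos rfl]
    rw [tJA_apply] at he
    have hne : ∃ l, A l j * A l.rev j.rev ≠ 0 := by
      by_contra hc
      push_neg at hc
      rw [Finset.sum_eq_zero (fun l _ => hc l)] at he
      norm_num at he
    obtain ⟨l, hl⟩ := hne
    rcases mul_ne_zero_iff.mp hl with ⟨ha, hb⟩
    exact ⟨l, (hA.1 l j).resolve_left ha, (hA.1 l.rev j.rev).resolve_left hb⟩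
  choose f hf1 hf2 using hex
  have hinj : Function.Injective f := by
    intro j₁ j₂ h
    exact hA.2.1 (f j₁) j₁ j₂ (hf1 j₁) (h ▸ hf1 j₂)
  have hbij : Function.Bijective f := Finite.injective_iff_bijective.mp hinj
  refine ⟨Equiv.ofBijective f hbij, ?_, ?_⟩
  · ext i j
    show A i j = if i = f j then 1 else 0
    by_cases h : i = f j
    · rw [if_pos h, h]; exact hf1 j
    · rw [if_neg h]
      rcases hA.1 i j with h0 | h0
      · exact h0
      · exact absurd (hA.2.2 j i (f j) h0 (hf1 j)) h
  · intro j
    show f j.rev = (f j).rev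
    exact hA.2.2 j.rev (f j.rev) (f j).rev (hf1 j.rev) (hf2 j)

theorem stmt0 (n : ℕ) (hn : 1 ≤ n) (A : Matrix (Fin (2 * n)) (Fin (2 * n)) ℤ)
    (hA : IsRook (2 * n) A) :
    MemRSp n A ↔
      ((Aᵀ * Jmat (2 * n) * A = 0 ∧ A * Jmat (2 * n) * Aᵀ = 0) ∨
        (Aᵀ * Jmat (2 * n) * A = Jmat (2 * n) ∧
          A * Jmat (2 * n) * Aᵀ = Jmat (2 * n))) := by
  constructor
  · intro h
    rcases h with ⟨σ, rfl, hpres⟩ | ⟨hcol, hrow⟩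
    · right
      have hc := comm_of_preserve n σ hpres
      exact ⟨tJA_perm n σ hc, AJt_perm n σ hc⟩
    · left
      exact prods_zero n A hA hcol hrow
  · intro h
    rcases h with ⟨h1, h2⟩ | ⟨h1, _⟩
    · right
      exact proper_of_zero n A hA h1 h2
    · left
      obtain ⟨σ, hAe, hc⟩ := perm_of_J n A hA h1
      exact ⟨σ, hAe, preserve_of_comm n σ hc⟩
end

section
/- Let n ≥ 1 and let J = J_{2n} be the 2n×2n antidiagonal permutation matrix. A 2n×2n permutation matrix A has underlying permutation mapping every admissible subset of {1,…,2n} to an admissible subset if and only if AᵗJA = AJAᵗ = J. -/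
open Matrix

/-!
Both matrices are permutation matrices: `permMat σ` is that of `σ⁻¹` and `J` that of the
reversal `r = Fin.revPerm`, so the two identities read `σ⁻¹ r σ = r` and `σ r σ⁻¹ = r`, i.e. both
say that `σ` commutes with `r`. A permutation commuting with `r` clearly preserves admissibility.
Conversely, if `σ (r i) ≠ r (σ i)`, put `j = σ⁻¹ (r (σ i))`; since `r` has no fixed points on
`Fin (2 * n)`, the pair `{i, j}` is admissible, but its image `{σ i, r (σ i)}` is not, and it is
not everything either, as it misses `σ (r i)`.
-/

open Equiv

lemma Equiv.Perm.permMatrix_injective {ι R : Type*} [DecidableEq ι] [MulZeroOneClass R]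
    [Nontrivial R] : Function.Injective (fun σ : Perm ι => σ.permMatrix R) := by
  intro σ τ h
  ext i
  simpa using congrArg (· i) (PEquiv.toMatrix_injective h)

lemma permMat_eq_permMatrix (m : ℕ) (σ : Perm (Fin m)) : permMat m σ = σ⁻¹.permMatrix ℤ := by
  ext i j
  simp [permMat, Equiv.symm_apply_eq]

lemma Jmat_eq_permMatrix (m : ℕ) : Jmat m = Fin.revPerm.permMatrix ℤ := by
  ext i j
  simp only [Jmat, of_apply, PEquiv.toMatrix_apply, toPEquiv_apply, Option.mem_def,
    Option.some.injEq, Fin.revPerm_apply, Fin.ext_iff, Fin.val_rev]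
  congr 1
  grind

lemma commute_iff_inv_mul_mul_eq {G : Type*} [Group G] {a b : G} :
    Commute a b ↔ a⁻¹ * b * a = b := by
  rw [mul_assoc, inv_mul_eq_iff_eq_mul, commute_iff_eq, eq_comm]

lemma commute_iff_mul_mul_inv_eq {G : Type*} [Group G] {a b : G} :
    Commute a b ↔ a * b * a⁻¹ = b := by
  rw [mul_inv_eq_iff_eq_mul, commute_iff_eq]

lemma permMat_transpose_mul_Jmat_mul_permMat_eq_iff (m : ℕ) (σ : Perm (Fin m)) :
    (permMat m σ)ᵀ * Jmat m * permMat m σ = Jmat m ↔ Commute σ Fin.revPerm := by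
  rw [permMat_eq_permMatrix, Jmat_eq_permMatrix, transpose_permMatrix, inv_inv,
    ← permMatrix_mul, ← permMatrix_mul, Perm.permMatrix_injective.eq_iff,
    commute_iff_inv_mul_mul_eq, mul_assoc]

lemma permMat_mul_Jmat_mul_permMat_transpose_eq_iff (m : ℕ) (σ : Perm (Fin m)) :
    permMat m σ * Jmat m * (permMat m σ)ᵀ = Jmat m ↔ Commute σ Fin.revPerm := by
  rw [permMat_eq_permMatrix, Jmat_eq_permMatrix, transpose_permMatrix, inv_inv,
    ← permMatrix_mul, ← permMatrix_mul, Perm.permMatrix_injective.eq_iff,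
    commute_iff_mul_mul_inv_eq, mul_assoc]

lemma Fin.rev_ne_self_of_two_mul {n : ℕ} (i : Fin (2 * n)) : Fin.rev i ≠ i := by
  rw [ne_eq, Fin.ext_iff, Fin.val_rev]
  omega

lemma commute_revPerm_iff {m : ℕ} (σ : Perm (Fin m)) :
    Commute σ Fin.revPerm ↔ ∀ i, σ (Fin.rev i) = Fin.rev (σ i) := by
  simp [commute_iff_eq, Perm.ext_iff]

section Admissible

variable {n : ℕ}

lemma admissible_pair {i j : Fin (2 * n)} (hji : j ≠ i) (hj : j ≠ Fin.rev i) :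
    Admissible n {i, j} := by
  right
  have := Fin.rev_ne_self_of_two_mul i
  have := Fin.rev_ne_self_of_two_mul j
  rintro x (rfl | rfl) (h | h) <;> grind [Fin.rev_rev]

lemma Admissible.image_of_commute {σ : Perm (Fin (2 * n))} (hσ : Commute σ Fin.revPerm)
    {P : Set (Fin (2 * n))} (hP : Admissible n P) : Admissible n (σ '' P) := by
  rw [commute_revPerm_iff] at hσ
  rcases hP with rfl | hP
  · exact .inl (Set.image_univ_of_surjective σ.surjective)
  · right
    rintro _ ⟨a, ha, rfl⟩ ⟨b, hb, hba⟩
    rw [← hσ, σ.injective.eq_iff] at hba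
    exact hP a ha (hba ▸ hb)

lemma commute_revPerm_of_forall_admissible_image {σ : Perm (Fin (2 * n))}
    (hσ : ∀ P, Admissible n P → Admissible n (σ '' P)) : Commute σ Fin.revPerm := by
  rw [commute_revPerm_iff]
  intro i
  by_contra hne
  set j := σ.symm (Fin.rev (σ i))
  have hσj : σ j = Fin.rev (σ i) := σ.apply_symm_apply _
  have hji : j ≠ i := fun h => Fin.rev_ne_self_of_two_mul (σ i) (h ▸ hσj).symm
  have hjrev : j ≠ Fin.rev i := fun h => hne (h ▸ hσj)
  rcases hσ _ (admissible_pair hji hjrev) with huniv | hadm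
  · obtain ⟨k, hk, hki⟩ := huniv.symm ▸ Set.mem_univ (σ (Fin.rev i))
    rw [σ.injective.eq_iff] at hki
    rcases hk with rfl | rfl
    exacts [Fin.rev_ne_self_of_two_mul _ hki.symm, hjrev hki]
  · exact hadm (σ i) ⟨i, by simp, rfl⟩ ⟨j, by simp, hσj⟩

lemma forall_admissible_image_iff_commute (σ : Perm (Fin (2 * n))) :
    (∀ P, Admissible n P → Admissible n (σ '' P)) ↔ Commute σ Fin.revPerm :=
  ⟨commute_revPerm_of_forall_admissible_image, fun hσ _ => Admissible.image_of_commute hσ⟩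

end Admissible

theorem stmt1_general (n : ℕ) (σ : Equiv.Perm (Fin (2 * n))) :
    (∀ P : Set (Fin (2 * n)), Admissible n P → Admissible n (σ '' P)) ↔
      ((permMat (2 * n) σ)ᵀ * Jmat (2 * n) * permMat (2 * n) σ = Jmat (2 * n) ∧
        permMat (2 * n) σ * Jmat (2 * n) * (permMat (2 * n) σ)ᵀ = Jmat (2 * n)) := by
  rw [forall_admissible_image_iff_commute, permMat_transpose_mul_Jmat_mul_permMat_eq_iff,
    permMat_mul_Jmat_mul_permMat_transpose_eq_iff, and_self]

theorem stmt1 (n : ℕ) (hn : 1 ≤ n) (σ : Equiv.Perm (Fin (2 * n))) :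
    (∀ P : Set (Fin (2 * n)), Admissible n P → Admissible n (σ '' P)) ↔
      ((permMat (2 * n) σ)ᵀ * Jmat (2 * n) * permMat (2 * n) σ = Jmat (2 * n) ∧
        permMat (2 * n) σ * Jmat (2 * n) * (permMat (2 * n) σ)ᵀ = Jmat (2 * n)) :=
  stmt1_general n σ
end

section
/- Let n ≥ 1, let J = J_{2n} be the 2n×2n antidiagonal permutation matrix, and let P be the 2n×2n block matrix with blocks [[0, J_n],[−J_n, 0]]. Then for every rook matrix A ∈ R_{2n}: APAᵗ = AᵗPA = 0 if and only if AJAᵗ = AᵗJA = 0. -/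
open Matrix

/-- The 2n×2n block matrix [[0, J_n], [−J_n, 0]]: its (i,j) entry is nonzero exactly
on the antidiagonal (1-based: i+j = 2n+1), equal to 1 in the first n rows and -1 in
the last n rows. -/
def Pmat (n : ℕ) : Matrix (Fin (2 * n)) (Fin (2 * n)) ℤ :=
  Matrix.of fun i j =>
    if (i : ℕ) + (j : ℕ) + 1 = 2 * n then (if (i : ℕ) < n then 1 else -1) else 0

lemma row_sign (n : ℕ) (A : Matrix (Fin (2*n)) (Fin (2*n)) ℤ) (hA : IsRook (2*n) A)
    (i : Fin (2*n)) :
    ∃ c : ℤ, c ≠ 0 ∧ ∀ k l, A i k * Pmat n k l = c * (A i k * Jmat (2*n) k l) := by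
  by_cases h : ∃ k, A i k = 1
  · obtain ⟨k₀, hk₀⟩ := h
    refine ⟨if (k₀:ℕ) < n then 1 else -1, by split_ifs <;> simp, ?_⟩
    intro k l
    rcases hA.1 i k with h0 | h1
    · simp [h0]
    · have hk : k = k₀ := hA.2.1 i k k₀ h1 hk₀
      subst hk
      simp only [h1, one_mul, Pmat, Jmat, Matrix.of_apply]
      split_ifs <;> simp
  · push_neg at h
    refine ⟨1, one_ne_zero, fun k l => ?_⟩
    have : A i k = 0 := (hA.1 i k).resolve_right (h k)
    simp [this]

lemma col_sign (n : ℕ) (A : Matrix (Fin (2*n)) (Fin (2*n)) ℤ) (hA : IsRook (2*n) A)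
    (i : Fin (2*n)) :
    ∃ c : ℤ, c ≠ 0 ∧ ∀ k l, A k i * Pmat n k l = c * (A k i * Jmat (2*n) k l) := by
  by_cases h : ∃ k, A k i = 1
  · obtain ⟨k₀, hk₀⟩ := h
    refine ⟨if (k₀:ℕ) < n then 1 else -1, by split_ifs <;> simp, ?_⟩
    intro k l
    rcases hA.1 k i with h0 | h1
    · simp [h0]
    · have hk : k = k₀ := hA.2.2 i k k₀ h1 hk₀
      subst hk
      simp only [h1, one_mul, Pmat, Jmat, Matrix.of_apply]
      split_ifs <;> simp
  · push_neg at h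
    refine ⟨1, one_ne_zero, fun k l => ?_⟩
    have : A k i = 0 := (hA.1 k i).resolve_right (h k)
    simp [this]

lemma row_key (n : ℕ) (A : Matrix (Fin (2*n)) (Fin (2*n)) ℤ) (c : ℤ) (i : Fin (2*n))
    (hc : ∀ k l, A i k * Pmat n k l = c * (A i k * Jmat (2*n) k l)) (j : Fin (2*n)) :
    (A * Pmat n * Aᵀ) i j = c * ((A * Jmat (2*n) * Aᵀ) i j) := by
  simp only [mul_apply, transpose_apply, Finset.sum_mul, Finset.mul_sum]
  refine Finset.sum_congr rfl fun l _ => Finset.sum_congr rfl fun k _ => ?_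
  rw [hc k l]; ring

lemma col_key (n : ℕ) (A : Matrix (Fin (2*n)) (Fin (2*n)) ℤ) (c : ℤ) (i : Fin (2*n))
    (hc : ∀ k l, A k i * Pmat n k l = c * (A k i * Jmat (2*n) k l)) (j : Fin (2*n)) :
    (Aᵀ * Pmat n * A) i j = c * ((Aᵀ * Jmat (2*n) * A) i j) := by
  simp only [mul_apply, transpose_apply, Finset.sum_mul, Finset.mul_sum]
  refine Finset.sum_congr rfl fun l _ => Finset.sum_congr rfl fun k _ => ?_
  rw [hc k l]; ring

theorem stmt2 (n : ℕ) (hn : 1 ≤ n) (A : Matrix (Fin (2 * n)) (Fin (2 * n)) ℤ)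
    (hA : IsRook (2 * n) A) :
    (A * Pmat n * Aᵀ = 0 ∧ Aᵀ * Pmat n * A = 0) ↔
      (A * Jmat (2 * n) * Aᵀ = 0 ∧ Aᵀ * Jmat (2 * n) * A = 0) := by
  have h1 : A * Pmat n * Aᵀ = 0 ↔ A * Jmat (2 * n) * Aᵀ = 0 := by
    constructor
    · intro h; ext i j
      obtain ⟨c, hc0, hc⟩ := row_sign n A hA i
      have := row_key n A c i hc j
      rw [h] at this
      simp only [Matrix.zero_apply] at this ⊢
      rcases mul_eq_zero.mp this.symm with h' | h'
      · exact absurd h' hc0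
      · exact h'
    · intro h; ext i j
      obtain ⟨c, hc0, hc⟩ := row_sign n A hA i
      have := row_key n A c i hc j
      rw [h] at this
      simpa using this
  have h2 : Aᵀ * Pmat n * A = 0 ↔ Aᵀ * Jmat (2 * n) * A = 0 := by
    constructor
    · intro h; ext i j
      obtain ⟨c, hc0, hc⟩ := col_sign n A hA i
      have := col_key n A c i hc j
      rw [h] at this
      simp only [Matrix.zero_apply] at this ⊢
      rcases mul_eq_zero.mp this.symm with h' | h'
      · exact absurd h' hc0
      · exact h'
    · intro h; ext i j
      obtain ⟨c, hc0, hc⟩ := col_sign n A hA i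
      have := col_key n A c i hc j
      rw [h] at this
      simpa using this
  rw [h1, h2]
end

section
/- Let n ≥ 1. A permutation σ of {1,…,2n} maps every admissible subset of {1,…,2n} to an admissible subset if and only if σ commutes with the bar involution, i.e. σ(ī) = \overline{σ(i)} for all i ∈ {1,…,2n}. -/
lemma rev_ne_self' {n : ℕ} (i : Fin (2 * n)) : i.rev ≠ i := by
  intro h
  have h1 : i.rev.val = i.val := by rw [h]
  have h2 := Fin.val_rev i
  have := i.isLt
  omega

theorem stmt4 (n : ℕ) (hn : 1 ≤ n) (σ : Equiv.Perm (Fin (2 * n))) :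
    (∀ P : Set (Fin (2 * n)), Admissible n P → Admissible n (σ '' P)) ↔
      ∀ i, σ i.rev = (σ i).rev := by
  constructor
  · intro h i
    by_contra hne
    set k := σ.symm ((σ i).rev) with hk
    have hki : (k : Fin (2*n)) ≠ i := by
      intro e
      apply rev_ne_self' (σ i)
      rw [← Equiv.apply_symm_apply σ ((σ i).rev), ← hk, e]
    have hkir : k ≠ i.rev := by
      intro e
      apply hne
      rw [← e, hk, Equiv.apply_symm_apply]
    have hP : Admissible n {i, k} := by
      right
      intro x hx hrx
      rcases hx with h1 | h1 <;> rcases hrx with h2 | h2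
      · exact rev_ne_self' x (h2.trans h1.symm)
      · exact hkir (by rw [← h2, h1])
      · exact hkir (by rw [← h2, Fin.rev_rev, h1])
      · exact rev_ne_self' x (h2.trans h1.symm)
    have him := h _ hP
    have himg : σ '' {i, k} = {σ i, (σ i).rev} := by
      rw [Set.image_pair]
      simp [hk]
    rw [himg] at him
    rcases him with huniv | hadm
    · -- univ has card 2n ≤ 2, so n = 1
      have hcard : 2 * n ≤ 2 := by
        have : (Set.univ : Set (Fin (2*n))).ncard ≤ 2 := by
          rw [← huniv]
          exact (Set.ncard_insert_le _ _).trans (by simp)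
        rw [Set.ncard_univ, Nat.card_eq_fintype_card, Fintype.card_fin] at this; exact this
      have hn1 : n = 1 := by omega
      subst hn1
      -- Fin 2: σ i.rev ≠ σ i and (σ i).rev ≠ σ i forces equality
      have h1 : σ i.rev ≠ σ i := fun e => rev_ne_self' i (σ.injective e)
      have h2 : (σ i).rev ≠ σ i := rev_ne_self' (σ i)
      apply hne
      have := (σ i.rev).isLt
      have := ((σ i).rev).isLt
      have := (σ i).isLt
      have hv : (σ i.rev).val = ((σ i).rev).val := by
        have e1 : (σ i.rev).val ≠ (σ i).val := fun e => h1 (Fin.ext e)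
        have e2 : ((σ i).rev).val ≠ (σ i).val := fun e => h2 (Fin.ext e)
        omega
      exact Fin.ext hv
    · exact hadm (σ i) (Or.inl rfl) (Or.inr rfl)
  · intro h P hP
    rcases hP with rfl | hP
    · left; simp [Set.image_univ, Equiv.range_eq_univ]
    · right
      rintro x ⟨a, ha, rfl⟩
      rw [← h]
      rintro ⟨b, hb, hab⟩
      have : b = a.rev := σ.injective hab
      subst this
      exact hP a ha hb
end

section
/- Let n ≥ 1, for 1 ≤ i ≤ n−1 let s_i be the permutation (i, i+1)(ī, \overline{i+1}) of {1,…,2n}, and for 0 ≤ i ≤ n−1 let t_i be the transposition (i+1, \overline{i+1}). For integers m, a with a ≥ 1 and m + a ≤ n, the product b⁻_{m,a} := t_m s_{m+1} s_{m+2} ⋯ s_{m+a−1} equals the single 2a-cycle (m+1, m+2, …, m+a, \overline{m+1}, \overline{m+2}, …, \overline{m+a}). -/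
/-- The element of Fin (2n) corresponding to the 1-based element k of {1,…,2n}. -/
def el (n : ℕ) (hn : 1 ≤ n) (k : ℕ) : Fin (2 * n) :=
  ⟨(k - 1) % (2 * n), Nat.mod_lt _ (by omega)⟩

/-- The permutation s_i = (i, i+1)(ī, \overline{i+1}) of {1,…,2n}. -/
def sPerm (n : ℕ) (hn : 1 ≤ n) (i : ℕ) : Equiv.Perm (Fin (2 * n)) :=
  Equiv.swap (el n hn i) (el n hn (i + 1)) *
    Equiv.swap (el n hn i).rev (el n hn (i + 1)).rev

/-- The transposition t_i = (i+1, \overline{i+1}) of {1,…,2n}. -/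
def tPerm (n : ℕ) (hn : 1 ≤ n) (i : ℕ) : Equiv.Perm (Fin (2 * n)) :=
  Equiv.swap (el n hn (i + 1)) (el n hn (i + 1)).rev

/-!
Induction on `a`, starting from `t_m = (m+1, \overline{m+1})`. Right multiplication of a cycle
`(… x … y)` by `swap x x' * swap y y'` inserts `x'` after `x` and `y'` after `y`, because
`formPerm (l ++ [x, x']) = formPerm (l ++ [x]) * swap x x'` and a cycle is unchanged by rotating
its list. With `x = m+a`, `y = \overline{m+a}` this turns the `2a`-cycle into the `2(a+1)`-cycle,
and `swap x x' * swap y y'` is exactly `s_{m+a}`.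
-/

open List

section FormPerm

variable {α : Type*} [DecidableEq α]

theorem List.formPerm_append_pair_append_pair {l₁ l₂ : List α} {x x' y y' : α}
    (h : (l₁ ++ [x, x'] ++ l₂ ++ [y, y']).Nodup) :
    (l₁ ++ [x, x'] ++ l₂ ++ [y, y']).formPerm =
      (l₁ ++ [x] ++ l₂ ++ [y]).formPerm * Equiv.swap x x' * Equiv.swap y y' := by
  have hA : (l₁ ++ [x, x'] ++ l₂ ++ [y]).Nodup := h.sublist (by simp)
  have hB : (l₁ ++ [x] ++ l₂ ++ [y]).Nodup := h.sublist (by simp)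
  calc (l₁ ++ [x, x'] ++ l₂ ++ [y, y']).formPerm
      = (l₁ ++ [x, x'] ++ l₂ ++ [y]).formPerm * Equiv.swap y y' := formPerm_append_pair _ _ _
    _ = (l₂ ++ [y] ++ l₁ ++ [x, x']).formPerm * Equiv.swap y y' := by
      rw [formPerm_eq_of_isRotated hA (l' := l₂ ++ [y] ++ l₁ ++ [x, x'])
        (by simpa using isRotated_append (l := l₁ ++ [x, x']) (l' := l₂ ++ [y]))]
    _ = (l₂ ++ [y] ++ l₁ ++ [x]).formPerm * Equiv.swap x x' * Equiv.swap y y' := by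
      rw [formPerm_append_pair]
    _ = (l₁ ++ [x] ++ l₂ ++ [y]).formPerm * Equiv.swap x x' * Equiv.swap y y' := by
      rw [formPerm_eq_of_isRotated hB (l' := l₂ ++ [y] ++ l₁ ++ [x])
        (by simpa using isRotated_append (l := l₁ ++ [x]) (l' := l₂ ++ [y]))]

theorem formPerm_map_range_append_map_range_add_two {g f : ℕ → α} {a : ℕ}
    (h : ((range (a + 2)).map g ++ (range (a + 2)).map f).Nodup) :
    ((range (a + 2)).map g ++ (range (a + 2)).map f).formPerm =
      ((range (a + 1)).map g ++ (range (a + 1)).map f).formPerm *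
        (Equiv.swap (g a) (g (a + 1)) * Equiv.swap (f a) (f (a + 1))) := by
  have range_two (u : ℕ → α) : (range (a + 2)).map u = (range a).map u ++ [u a, u (a + 1)] := by
    simp [range_succ]
  have range_one (u : ℕ → α) : (range (a + 1)).map u = (range a).map u ++ [u a] := by
    simp [range_succ]
  rw [range_two, range_two, ← append_assoc] at h ⊢
  rw [range_one, range_one, ← append_assoc, formPerm_append_pair_append_pair h, mul_assoc]

end FormPerm

theorem el_val (n : ℕ) (hn : 1 ≤ n) {k : ℕ} (hk : k ≤ 2 * n) : (el n hn k).val = k - 1 :=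
  Nat.mod_eq_of_lt (by omega)

theorem nodup_map_el_append_map_el_rev (n : ℕ) (hn : 1 ≤ n) {m a : ℕ} (hma : m + a ≤ n) :
    ((range a).map (fun j => el n hn (m + 1 + j)) ++
      (range a).map (fun j => (el n hn (m + 1 + j)).rev)).Nodup := by
  have hval : ∀ j ∈ range a, (el n hn (m + 1 + j)).val = m + j := fun j hj => by
    rw [el_val n hn (by rw [mem_range] at hj; omega)]; omega
  refine nodup_append.2 ⟨nodup_range.map_on fun i hi j hj hij => ?_,
    nodup_range.map_on fun i hi j hj hij => ?_, ?_⟩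
  · have := congrArg Fin.val hij
    rw [hval i hi, hval j hj] at this
    omega
  · have := congrArg Fin.val hij
    rw [Fin.val_rev, Fin.val_rev, hval i hi, hval j hj] at this
    rw [mem_range] at hi
    omega
  · simp only [mem_map]
    rintro _ ⟨i, hi, rfl⟩ _ ⟨j, hj, hji⟩ hij
    have := congrArg Fin.val (hij.trans hji.symm)
    rw [Fin.val_rev, hval i hi, hval j hj] at this
    rw [mem_range] at hi hj
    omega

/-- b⁻_{m,a} = t_m s_{m+1} s_{m+2} ⋯ s_{m+a-1} equals the single 2a-cycle
(m+1, …, m+a, \overline{m+1}, …, \overline{m+a}). -/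
theorem stmt6 (n : ℕ) (hn : 1 ≤ n) (m a : ℕ) (ha : 1 ≤ a) (hma : m + a ≤ n) :
    tPerm n hn m * ((List.range (a - 1)).map fun j => sPerm n hn (m + 1 + j)).prod =
      List.formPerm (((List.range a).map fun j => el n hn (m + 1 + j)) ++
        ((List.range a).map fun j => (el n hn (m + 1 + j)).rev)) := by
  obtain ⟨b, rfl⟩ := Nat.exists_eq_add_of_le' ha
  clear ha
  rw [Nat.add_sub_cancel]
  induction b with
  | zero => simp [tPerm]
  | succ b ih =>
    rw [range_succ, map_append, map_singleton, prod_append, ← mul_assoc, ih (by omega),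
      formPerm_map_range_append_map_range_add_two (nodup_map_el_append_map_el_rev n hn hma)]
    rfl
end

section
/- Let n ≥ 1 and 0 ≤ t ≤ n. Let W_n be the group of permutations of {1,…,2n} commuting with the bar involution, and let H ≤ W_n be the stabilizer of the set {1,…,t}, so H is (isomorphic to) S_t × W_{n−t}. Let χ̄ : S_t → ℂ be a class function on the symmetric group S_t of {1,…,t}. Then for every σ ∈ W_n: ∑_{K ∈ C(t,σ)} χ̄(σ_K) = (1/|H|) · ∑_{τ ∈ W_n with τ⁻¹στ ∈ H} χ̄((τ⁻¹στ)|_{{1,…,t}}), where C(t,σ) is the set of properly admissible subsets K ⊆ {1,…,2n} with |K| = t and σ(K) = K; the right-hand side is the value at σ of the character of S_t × W_{n−t} given by χ̄ ⊠ 1 induced up to W_n. -/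
/-!
The group `W` acts on subsets of `Fin (2 * n)`, and the orbit of `A = {0, …, t - 1}` is exactly the
set of properly admissible `t`-subsets: such a `K` extends to a set `S` meeting every pair
`{i, ī}` exactly once, and a bijection from the lower half onto `S` carrying `A` onto `K` extends
uniquely to a bar-equivariant permutation. Hence `τ ↦ τ • A` maps `{τ ∈ W | τ⁻¹ σ τ ∈ H}` onto the
`σ`-stable admissible `t`-subsets, with fibres the cosets `τ H`, all of size `|H|`; on the fibre
over `K`, the restriction of `τ⁻¹ σ τ` to `A` is conjugate to `σ_K`, so every fibre contributes
`|H| · χ(σ_K)`.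
-/

open scoped Classical

/-- Given K ⊆ Fin m with |K| = t and σ(K) = K, the permutation σ_K = ι_K⁻¹ ∘ σ ∘ ι_K
of Fin t, where ι_K : Fin t → K is the order-preserving bijection (junk value `1`
if the hypotheses fail). -/
noncomputable def permOnSubset {m : ℕ} (t : ℕ) (σ : Equiv.Perm (Fin m))
    (K : Finset (Fin m)) : Equiv.Perm (Fin t) :=
  if h : K.card = t ∧ K.image σ = K then
    (K.orderIsoOfFin h.1).toEquiv.symm.permCongr
      (σ.subtypePerm (fun x => Iff.symm <| by
        constructor
        · intro hx
          rw [← h.2]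
          exact Finset.mem_image_of_mem σ hx
        · intro hx
          rw [← h.2] at hx
          obtain ⟨y, hy, hyx⟩ := Finset.mem_image.mp hx
          rwa [← σ.injective hyx]))
  else 1

/-- For π : Perm (Fin m) stabilizing {j : j < t}, the restriction of π to a
permutation of Fin t (junk value `1` if the hypotheses fail). -/
noncomputable def restrictPerm (m t : ℕ) (π : Equiv.Perm (Fin m)) :
    Equiv.Perm (Fin t) :=
  if h : t ≤ m ∧ ∀ j : Fin m, ((j : ℕ) < t ↔ ((π j : ℕ) < t)) then
    Equiv.permCongr (α' := {j : Fin m // (j : ℕ) < t}) (β' := Fin t)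
      { toFun := fun x => ⟨(x.1 : ℕ), x.2⟩
        invFun := fun j => ⟨⟨(j : ℕ), lt_of_lt_of_le j.2 h.1⟩, j.2⟩
        left_inv := fun _ => rfl
        right_inv := fun _ => rfl }
      (π.subtypePerm (fun j => (h.2 j).symm))
  else 1

open Equiv Finset MulAction Pointwise

theorem MulAction.card_smul_eq_smul_eq_card_stabilizer {G X : Type*} [Group G] [MulAction G X]
    (b : X) (g₀ : G) : Nat.card {g : G // g • b = g₀ • b} = Nat.card (stabilizer G b) :=
  Nat.card_congr <| (Equiv.mulLeft g₀⁻¹).subtypeEquiv fun g => by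
    rw [mem_stabilizer_iff, coe_mulLeft, mul_smul, inv_smul_eq_iff]

theorem MulAction.sum_smul_eq_card_stabilizer_nsmul_sum_orbit {G X M : Type*} [Group G]
    [Fintype G] [MulAction G X] [AddCommMonoid M] (b : X) [Fintype (orbit G b)] (f : X → M) :
    ∑ g : G, f (g • b) = Nat.card (stabilizer G b) • ∑ x : orbit G b, f x := by
  rw [← Fintype.sum_fiberwise (fun g : G => (⟨g • b, mem_orbit b g⟩ : orbit G b)), smul_sum]
  refine Fintype.sum_congr _ _ fun ⟨x, g₀, hx⟩ => ?_
  subst hx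
  rw [Fintype.sum_congr _ (fun _ => f (g₀ • b)) fun g => congrArg (f ∘ Subtype.val) g.2,
    sum_const, card_univ, ← Nat.card_eq_fintype_card, ← card_smul_eq_smul_eq_card_stabilizer b g₀,
    Nat.card_congr (Equiv.subtypeEquivRight fun g => Subtype.ext_iff)]

theorem Finset.sum_filter_and_eq_sum_subtype {α M : Type*} [Fintype α] [AddCommMonoid M]
    (p q : α → Prop) [DecidablePred p] [DecidablePred q] (f : α → M) :
    ∑ a ∈ univ.filter (fun a => p a ∧ q a), f a = ∑ a : Subtype p, if q a then f a else 0 := by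
  rw [← filter_filter, sum_filter, sum_subtype (p := p) _ (by simp) fun a => if q a then f a else 0]

theorem Equiv.Perm.smul_finset_eq_self_iff {α : Type*} [DecidableEq α] {π : Perm α}
    {s : Finset α} : π • s = s ↔ ∀ x, x ∈ s ↔ π x ∈ s := by
  refine ⟨fun h x => by rw [← smul_mem_smul_finset_iff π, h, Perm.smul_def], fun h => ?_⟩
  refine eq_of_subset_of_card_le (fun y hy => ?_) (card_smul_finset π s).ge
  obtain ⟨x, hx, rfl⟩ := mem_smul_finset.mp hy
  exact (h x).mp hx

theorem Equiv.isConj_permCongr {α β : Type*} (e₁ e₂ : α ≃ β) (p : Perm α) :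
    IsConj (e₁.permCongr p) (e₂.permCongr p) :=
  isConj_iff.mpr ⟨e₁.symm.trans e₂, by ext; simp⟩

/-- `W_n` for `m = 2 * n`: `Fin.rev` is the bar involution in `0`-based indexing. -/
abbrev revCentralizer (m : ℕ) : Subgroup (Perm (Fin m)) := Subgroup.centralizer {Fin.revPerm}

theorem mem_revCentralizer {m : ℕ} {π : Perm (Fin m)} :
    π ∈ revCentralizer m ↔ ∀ i, π i.rev = (π i).rev := by
  simp [Subgroup.mem_centralizer_singleton_iff, Equiv.ext_iff]

def IsProperlyAdmissible {m : ℕ} (K : Finset (Fin m)) : Prop := ∀ i ∈ K, i.rev ∉ K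

def initialSegment (m t : ℕ) : Finset (Fin m) := {j | (j : ℕ) < t}

theorem mem_initialSegment {m t : ℕ} {j : Fin m} : j ∈ initialSegment m t ↔ (j : ℕ) < t := by
  simp [initialSegment]

theorem card_initialSegment {m t : ℕ} (h : t ≤ m) : #(initialSegment m t) = t := by
  rw [initialSegment, Fin.card_filter_val_lt, min_eq_right h]

theorem smul_initialSegment_eq_self_iff {m t : ℕ} {π : Perm (Fin m)} :
    π • initialSegment m t = initialSegment m t ↔ ∀ j : Fin m, ((j : ℕ) < t ↔ (π j : ℕ) < t) := by
  rw [Perm.smul_finset_eq_self_iff]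
  simp only [mem_initialSegment]

theorem isProperlyAdmissible_initialSegment {n t : ℕ} (htn : t ≤ n) :
    IsProperlyAdmissible (initialSegment (2 * n) t) := by
  intro i hi hrev
  rw [mem_initialSegment, Fin.val_rev] at hrev
  rw [mem_initialSegment] at hi
  omega

theorem IsProperlyAdmissible.smul {m : ℕ} {τ : Perm (Fin m)} (hτ : τ ∈ revCentralizer m)
    {K : Finset (Fin m)} (hK : IsProperlyAdmissible K) : IsProperlyAdmissible (τ • K) := by
  intro i hi hrev
  obtain ⟨a, ha, rfl⟩ := mem_smul_finset.mp hi
  rw [Perm.smul_def, ← mem_revCentralizer.mp hτ a, ← Perm.smul_def,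
    smul_mem_smul_finset_iff] at hrev
  exact hK a ha hrev

theorem card_eq_of_forall_mem_iff_rev_notMem {n : ℕ} {S : Finset (Fin (2 * n))}
    (hS : ∀ x, x ∈ S ↔ x.rev ∉ S) : #S = n := by
  have hcompl : Sᶜ = S.map Fin.revPerm.toEmbedding := by
    ext x
    rw [mem_compl, mem_map_equiv, Fin.revPerm_symm, Fin.revPerm_apply, hS x, not_not]
  have := card_add_card_compl S
  rw [hcompl, card_map, Fintype.card_fin] at this
  omega

theorem IsProperlyAdmissible.exists_superset_card_eq {n : ℕ} {K : Finset (Fin (2 * n))}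
    (hK : IsProperlyAdmissible K) : ∃ S, K ⊆ S ∧ IsProperlyAdmissible S ∧ #S = n := by
  let S : Finset (Fin (2 * n)) := K ∪ univ.filter fun x => (x : ℕ) < n ∧ x.rev ∉ K
  have hS (x : Fin (2 * n)) : x ∈ S ↔ x.rev ∉ S := by
    have hx := hK x
    have hxrev := hK x.rev
    have hlt : (x : ℕ) < n ↔ ¬ (x.rev : ℕ) < n := by rw [Fin.val_rev]; omega
    simp only [S, mem_union, mem_filter, mem_univ, true_and, Fin.rev_rev] at hxrev ⊢
    tauto
  exact ⟨S, subset_union_left, fun x hx => (hS x).mp hx, card_eq_of_forall_mem_iff_rev_notMem hS⟩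

theorem exists_mem_revCentralizer_apply_castLE_eq {n : ℕ} {S : Finset (Fin (2 * n))}
    (hS : IsProperlyAdmissible S) (g : Fin n ≃ S) :
    ∃ τ ∈ revCentralizer (2 * n), ∀ i : Fin n, τ (i.castLE (by omega)) = g i := by
  have hrev {x : Fin (2 * n)} (hx : ¬ (x : ℕ) < n) : (x.rev : ℕ) < n := by
    rw [Fin.val_rev]; omega
  let τ : Fin (2 * n) → Fin (2 * n) := fun x =>
    if hx : (x : ℕ) < n then g ⟨x, hx⟩ else (g ⟨x.rev, hrev hx⟩ : Fin (2 * n)).rev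
  have hτ : τ.Injective := by
    intro x y hxy
    simp only [τ] at hxy
    split_ifs at hxy with hx hy hy
    · exact Fin.ext (Fin.mk.inj_iff.mp (g.injective (Subtype.ext hxy)))
    · exact absurd (hxy ▸ (g _).2) (hS _ (g _).2)
    · exact absurd (hxy ▸ (g _).2) (hS _ (g _).2)
    · exact Fin.rev_injective <| Fin.ext <|
        Fin.mk.inj_iff.mp (g.injective (Subtype.ext (Fin.rev_injective hxy)))
  refine ⟨Equiv.ofBijective τ (Finite.injective_iff_bijective.mp hτ),
    mem_revCentralizer.mpr fun x => ?_, fun i => by simp [τ]⟩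
  simp only [Equiv.ofBijective_apply, τ]
  by_cases hx : (x : ℕ) < n
  · rw [dif_neg (by rw [Fin.val_rev]; omega), dif_pos hx]
    simp
  · rw [dif_pos (hrev hx), dif_neg hx, Fin.rev_rev]

theorem IsProperlyAdmissible.exists_smul_initialSegment_eq {n t : ℕ} {K : Finset (Fin (2 * n))}
    (hK : IsProperlyAdmissible K) (hKt : #K = t) :
    ∃ τ ∈ revCentralizer (2 * n), τ • initialSegment (2 * n) t = K := by
  obtain ⟨S, hKS, hS, hSn⟩ := hK.exists_superset_card_eq
  have htn : t ≤ n := hKt ▸ (card_le_card hKS).trans_eq hSn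
  let f : Fin n → Fin (2 * n) := fun i =>
    if hi : (i : ℕ) < t then K.orderEmbOfFin hKt ⟨i, hi⟩ else i.castLE (by omega)
  have hfK {i : Fin n} (hi : (i : ℕ) < t) : f i = K.orderEmbOfFin hKt ⟨i, hi⟩ := dif_pos hi
  obtain ⟨g, hg⟩ := exists_equiv_extend_of_card_eq
    (s := univ.filter fun i : Fin n => (i : ℕ) < t) (f := f) (by rw [Fintype.card_fin, hSn])
    (by
      simp only [image_subset_iff, mem_filter, mem_univ, true_and]
      exact fun i hi => hKS (hfK hi ▸ K.orderEmbOfFin_mem hKt _))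
    (fun i hi j hj hij => by
      simp only [coe_filter, mem_univ, true_and, Set.mem_ofPred_eq] at hi hj
      rw [hfK hi, hfK hj] at hij
      exact Fin.ext (Fin.mk.inj_iff.mp ((K.orderEmbOfFin hKt).injective hij)))
  obtain ⟨τ, hτW, hτ⟩ := exists_mem_revCentralizer_apply_castLE_eq hS g
  refine ⟨τ, hτW, eq_of_subset_of_card_le ?_ ?_⟩
  · intro x hx
    obtain ⟨a, ha, rfl⟩ := mem_smul_finset.mp hx
    have hat : (a : ℕ) < t := mem_initialSegment.mp ha
    have hτa := hτ ⟨a, by omega⟩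
    rw [hg _ (by simpa using hat), hfK hat] at hτa
    rw [Perm.smul_def]
    exact hτa ▸ K.orderEmbOfFin_mem hKt _
  · rw [card_smul_finset, card_initialSegment (by omega), hKt]

theorem mem_orbit_initialSegment_iff {n t : ℕ} (htn : t ≤ n) {K : Finset (Fin (2 * n))} :
    K ∈ orbit (revCentralizer (2 * n)) (initialSegment (2 * n) t) ↔
      IsProperlyAdmissible K ∧ #K = t := by
  constructor
  · rintro ⟨τ, rfl⟩
    exact ⟨(isProperlyAdmissible_initialSegment htn).smul τ.2,
      (card_smul_finset _ _).trans (card_initialSegment (by omega))⟩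
  · rintro ⟨hK, hKt⟩
    obtain ⟨τ, hτW, hτ⟩ := hK.exists_smul_initialSegment_eq hKt
    exact ⟨⟨τ, hτW⟩, hτ⟩

theorem isConj_restrictPerm_permOnSubset {m t : ℕ} (htm : t ≤ m) {σ τ : Perm (Fin m)}
    (hσ : (τ • initialSegment m t).image σ = τ • initialSegment m t) :
    IsConj (restrictPerm m t (τ⁻¹ * σ * τ)) (permOnSubset t σ (τ • initialSegment m t)) := by
  set K := τ • initialSegment m t
  have hK : #K = t := (card_smul_finset _ _).trans (card_initialSegment htm)
  have hmem (a : Fin m) : (a : ℕ) < t ↔ τ a ∈ K := by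
    rw [← Perm.smul_def, smul_mem_smul_finset_iff, mem_initialSegment]
  have hσK (x : Fin m) : x ∈ K ↔ σ x ∈ K := by
    conv_rhs => rw [← hσ]
    exact σ.injective.mem_finset_image.symm
  have hstab (j : Fin m) : (j : ℕ) < t ↔ ((τ⁻¹ * σ * τ) j : ℕ) < t := by
    rw [hmem, hmem, Perm.mul_apply, Perm.mul_apply, Perm.inv_def, apply_symm_apply, hσK]
  let u : {j : Fin m // (j : ℕ) < t} ≃ Fin t :=
    { toFun := fun x => ⟨x.1, x.2⟩
      invFun := fun j => ⟨⟨j, by omega⟩, j.2⟩ }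
  rw [restrictPerm, dif_pos ⟨htm, hstab⟩, permOnSubset, dif_pos ⟨hK, hσ⟩]
  convert isConj_permCongr ((τ.subtypeEquiv hmem).symm.trans u) _ _ using 1
  ext x
  simp [u]

theorem sum_filter_stable_eq_sum_orbit_initialSegment {M : Type*} [AddCommMonoid M] {n t : ℕ}
    (htn : t ≤ n) (σ : Perm (Fin (2 * n))) (f : Finset (Fin (2 * n)) → M) :
    ∑ K ∈ univ.filter (fun K : Finset (Fin (2 * n)) =>
        (∀ i ∈ K, i.rev ∉ K) ∧ K.card = t ∧ K.image σ = K), f K =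
      ∑ K : orbit (revCentralizer (2 * n)) (initialSegment (2 * n) t),
        if (K : Finset (Fin (2 * n))).image σ = K then f K else 0 := by
  rw [← sum_subtype (p := (· ∈ orbit (revCentralizer (2 * n)) (initialSegment (2 * n) t)))
      (univ.filter fun K => IsProperlyAdmissible K ∧ #K = t)
      (fun K => by rw [mem_orbit_initialSegment_iff htn, mem_filter, and_iff_right (mem_univ K)])
      fun K => if K.image σ = K then f K else 0,
    ← sum_filter, filter_filter]
  congr 1
  ext K
  simp only [mem_filter, and_assoc]
  -- the two sides differ only by unfolding `IsProperlyAdmissible` and decidability instances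
  rfl

theorem card_filter_eq_card_stabilizer_initialSegment (m t : ℕ) :
    (univ.filter (fun τ : Perm (Fin m) =>
        (∀ i, τ i.rev = (τ i).rev) ∧ ∀ j : Fin m, ((j : ℕ) < t ↔ ((τ j : ℕ) < t)))).card =
      Nat.card (stabilizer (revCentralizer m) (initialSegment m t)) := by
  simp only [← mem_revCentralizer, ← smul_initialSegment_eq_self_iff]
  rw [← Fintype.card_subtype, ← Nat.card_eq_fintype_card]
  exact Nat.card_congr (Equiv.subtypeSubtypeEquivSubtypeInter _ _).symm

theorem sum_filter_conj_restrictPerm_eq_sum_revCentralizer {m t : ℕ} (htm : t ≤ m)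
    {χ : Perm (Fin t) → ℂ} (hχ : ∀ g h : Perm (Fin t), χ (h * g * h⁻¹) = χ g)
    {σ : Perm (Fin m)} (hσ : σ ∈ revCentralizer m) :
    ∑ τ ∈ univ.filter (fun τ : Perm (Fin m) =>
        (∀ i, τ i.rev = (τ i).rev) ∧
          (∀ i, (τ⁻¹ * σ * τ) i.rev = ((τ⁻¹ * σ * τ) i).rev) ∧
          ∀ j : Fin m, ((j : ℕ) < t ↔ (((τ⁻¹ * σ * τ) j : ℕ) < t))),
        χ (restrictPerm m t (τ⁻¹ * σ * τ)) =
      ∑ τ : revCentralizer m, if (τ • initialSegment m t).image σ = τ • initialSegment m t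
        then χ (permOnSubset t σ (τ • initialSegment m t)) else 0 := by
  simp only [← mem_revCentralizer, ← smul_initialSegment_eq_self_iff, mul_smul, inv_smul_eq_iff]
  rw [filter_congr fun τ _ => and_congr_right fun hτ =>
      and_iff_right (mul_mem (mul_mem (inv_mem hτ) hσ) hτ),
    sum_filter_and_eq_sum_subtype]
  refine Fintype.sum_congr _ _ fun τ => ?_
  rw [Subgroup.smul_def]
  refine if_ctx_congr Iff.rfl (fun h => ?_) fun _ => rfl
  obtain ⟨c, hc⟩ := isConj_iff.mp (isConj_restrictPerm_permOnSubset htm h)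
  rw [← hc, hχ]

theorem stmt10_general (n t : ℕ) (htn : t ≤ n)
    (χ : Equiv.Perm (Fin t) → ℂ)
    (hχ : ∀ g h : Equiv.Perm (Fin t), χ (h * g * h⁻¹) = χ g)
    (σ : Equiv.Perm (Fin (2 * n))) (hσ : ∀ i, σ i.rev = (σ i).rev) :
    ∑ K ∈ Finset.univ.filter (fun K : Finset (Fin (2 * n)) =>
        (∀ i ∈ K, i.rev ∉ K) ∧ K.card = t ∧ K.image σ = K),
      χ (permOnSubset t σ K) =
    (1 / ((Finset.univ.filter (fun τ : Equiv.Perm (Fin (2 * n)) =>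
          (∀ i, τ i.rev = (τ i).rev) ∧
            ∀ j : Fin (2 * n), ((j : ℕ) < t ↔ ((τ j : ℕ) < t)))).card : ℂ)) *
      ∑ τ ∈ Finset.univ.filter (fun τ : Equiv.Perm (Fin (2 * n)) =>
          (∀ i, τ i.rev = (τ i).rev) ∧
            (∀ i, (τ⁻¹ * σ * τ) i.rev = ((τ⁻¹ * σ * τ) i).rev) ∧
            ∀ j : Fin (2 * n), ((j : ℕ) < t ↔ (((τ⁻¹ * σ * τ) j : ℕ) < t))),
        χ (restrictPerm (2 * n) t (τ⁻¹ * σ * τ)) := by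
  rw [sum_filter_stable_eq_sum_orbit_initialSegment htn,
    sum_filter_conj_restrictPerm_eq_sum_revCentralizer (by omega) hχ (mem_revCentralizer.mpr hσ),
    card_filter_eq_card_stabilizer_initialSegment, sum_smul_eq_card_stabilizer_nsmul_sum_orbit
      (initialSegment (2 * n) t) fun K => if K.image σ = K then χ (permOnSubset t σ K) else 0,
    nsmul_eq_mul, one_div, inv_mul_cancel_left₀ (Nat.cast_ne_zero.mpr Nat.card_pos.ne')]

theorem stmt10 (n t : ℕ) (hn : 1 ≤ n) (htn : t ≤ n)
    (χ : Equiv.Perm (Fin t) → ℂ)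
    (hχ : ∀ g h : Equiv.Perm (Fin t), χ (h * g * h⁻¹) = χ g)
    (σ : Equiv.Perm (Fin (2 * n))) (hσ : ∀ i, σ i.rev = (σ i).rev) :
    ∑ K ∈ Finset.univ.filter (fun K : Finset (Fin (2 * n)) =>
        (∀ i ∈ K, i.rev ∉ K) ∧ K.card = t ∧ K.image σ = K),
      χ (permOnSubset t σ K) =
    (1 / ((Finset.univ.filter (fun τ : Equiv.Perm (Fin (2 * n)) =>
          (∀ i, τ i.rev = (τ i).rev) ∧
            ∀ j : Fin (2 * n), ((j : ℕ) < t ↔ ((τ j : ℕ) < t)))).card : ℂ)) *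
      ∑ τ ∈ Finset.univ.filter (fun τ : Equiv.Perm (Fin (2 * n)) =>
          (∀ i, τ i.rev = (τ i).rev) ∧
            (∀ i, (τ⁻¹ * σ * τ) i.rev = ((τ⁻¹ * σ * τ) i).rev) ∧
            ∀ j : Fin (2 * n), ((j : ℕ) < t ↔ (((τ⁻¹ * σ * τ) j : ℕ) < t))),
        χ (restrictPerm (2 * n) t (τ⁻¹ * σ * τ)) :=
  stmt10_general n t htn χ hχ σ hσ
end
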